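/- Let D_K and P_K be the operators on ℝ[[x]] with kernel K(x,t) = e^{-x+t}, i.e., P_K(f) = e^{-x}∫₀ˣ e^t f(t)dt and D_K(f) = e^{-x}(e^x f)' = f + f' (termwise on power series). Then for every k ≥ 0, P_K^k(1) = Σ_{n≥k} (-1)^{n-k} C(n-1, k-1) xⁿ/n!, with the convention C(i,-1) = δ_{i,-1}, so in particular P_K^k(1) ∈ xᵏℝ[[x]] \ xᵏ⁺¹ℝ[[x]] for k ≥ 1. -/

import Mathlib

open PowerSeries

/-- Termwise integration on `ℝ⟦X⟧`. -/
noncomputable def integ (f : ℝ⟦X⟧) : ℝ⟦X⟧ :=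
  PowerSeries.mk fun n => if n = 0 then 0 else (PowerSeries.coeff (n - 1) f) / n

/-- The Volterra operator with kernel `e^{-x+t}`: `P_K(f) = e^{-x}·∫₀ˣ e^t f(t) dt`. -/
noncomputable def PK (f : ℝ⟦X⟧) : ℝ⟦X⟧ :=
  rescale (-1 : ℝ) (exp ℝ) * integ (exp ℝ * f)

/-!
Multiplication by `e^{-x}` conjugates `P_K` into plain termwise integration:
`P_K(e^{-x} g) = e^{-x} ∫₀ˣ g`. Since `1 = e^{-x} e^x`, this gives `P_K^k(1) = e^{-x} ∫^k e^x`, and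
`∫^k e^x = Σ_{n ≥ k} xⁿ/n!`. The `n`-th coefficient of the product with `e^{-x}` is
`(1/n!) Σ_{i ≤ n-k} (-1)^i C(n,i)`, a partial alternating binomial sum, which equals
`(-1)^{n-k} C(n-1,k-1)`.
-/

open Finset

lemma exp_mul_rescale_neg_one_exp (A : Type*) [CommRing A] [Algebra ℚ A] :
    exp A * rescale (-1 : A) (exp A) = 1 :=
  exp_mul_exp_neg_eq_one

lemma PK_rescale_neg_one_exp_mul (g : ℝ⟦X⟧) :
    PK (rescale (-1 : ℝ) (exp ℝ) * g) = rescale (-1 : ℝ) (exp ℝ) * integ g := by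
  rw [PK, ← mul_assoc, exp_mul_rescale_neg_one_exp ℝ, one_mul]

lemma iterate_PK_rescale_neg_one_exp_mul (k : ℕ) (g : ℝ⟦X⟧) :
    PK^[k] (rescale (-1 : ℝ) (exp ℝ) * g) = rescale (-1 : ℝ) (exp ℝ) * integ^[k] g :=
  ((Function.Semiconj.iterate_right (f := (rescale (-1 : ℝ) (exp ℝ) * ·))
    (fun g => (PK_rescale_neg_one_exp_mul g).symm) k) g).symm

lemma iterate_PK_one (k : ℕ) : PK^[k] 1 = rescale (-1 : ℝ) (exp ℝ) * integ^[k] (exp ℝ) := by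
  rw [← iterate_PK_rescale_neg_one_exp_mul, mul_comm, exp_mul_rescale_neg_one_exp ℝ]

lemma coeff_iterate_integ_exp (k n : ℕ) :
    coeff n (integ^[k] (exp ℝ)) = if k ≤ n then (n.factorial : ℝ)⁻¹ else 0 := by
  induction k generalizing n with
  | zero => simp [coeff_exp]
  | succ k ih =>
    rw [Function.iterate_succ_apply', integ, coeff_mk]
    cases n with
    | zero => simp
    | succ m =>
      simp only [Nat.add_one_ne_zero, if_false, Nat.add_sub_cancel, ih, Nat.add_le_add_iff_right]
      split_ifs
      · rw [Nat.factorial_succ]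
        push_cast
        field_simp
      · simp

lemma coeff_rescale_neg_one_exp_mul {K : Type*} [Field K] [CharZero K] (f : K⟦X⟧) (n : ℕ) :
    coeff n (rescale (-1 : K) (exp K) * f) =
      ∑ i ∈ range (n + 1), (-1) ^ i / (i.factorial : K) * coeff (n - i) f := by
  rw [coeff_mul, Nat.sum_antidiagonal_eq_sum_range_succ_mk]
  simp [coeff_rescale, coeff_exp, div_eq_mul_inv]

lemma coeff_iterate_PK_one (k n : ℕ) :
    coeff n (PK^[k] 1) = ∑ i ∈ range (n + 1 - k), (-1) ^ i * (n.choose i : ℝ) / n.factorial := by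
  rw [iterate_PK_one, coeff_rescale_neg_one_exp_mul]
  calc _ = ∑ i ∈ range (n + 1 - k),
          (-1) ^ i / (i.factorial : ℝ) * coeff (n - i) (integ^[k] (exp ℝ)) := by
        refine (sum_subset (range_mono (by omega)) fun i hi hik => ?_).symm
        simp only [mem_range] at hi hik
        rw [coeff_iterate_integ_exp, if_neg (by omega), mul_zero]
    _ = _ := by
        refine sum_congr rfl fun i hi => ?_
        simp only [mem_range] at hi
        rw [coeff_iterate_integ_exp, if_pos (by omega), Nat.cast_choose ℝ (by omega : i ≤ n)]
        field_simp

lemma sum_range_neg_one_pow_mul_choose {R : Type*} [CommRing R] {k n : ℕ} (hk : k ≠ 0)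
    (hkn : k ≤ n) :
    ∑ i ∈ range (n + 1 - k), (-1) ^ i * (n.choose i : R) =
      (-1) ^ (n - k) * (n - 1).choose (k - 1) := by
  obtain ⟨m, rfl⟩ : ∃ m, n = m + 1 := ⟨n - 1, by omega⟩
  have h := congrArg (Int.cast : ℤ → R)
    (Int.alternating_sum_range_choose_eq_choose (n := m) (m := m + 1 - k))
  push_cast at h
  rw [show m + 1 + 1 - k = m + 1 - k + 1 by omega, h, Nat.add_sub_cancel,
    Nat.choose_symm_of_eq_add (show m = m + 1 - k + (k - 1) by omega)]

lemma coeff_iterate_PK_one_of_ne_zero {k : ℕ} (hk : k ≠ 0) (n : ℕ) :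
    coeff n (PK^[k] 1) =
      if n < k then 0 else (-1) ^ (n - k) * ((n - 1).choose (k - 1) : ℝ) / n.factorial := by
  rw [coeff_iterate_PK_one]
  split_ifs with hn
  · rw [show n + 1 - k = 0 by omega, sum_range_zero]
  · rw [← sum_div, sum_range_neg_one_pow_mul_choose hk (by omega)]

/-- `P_K^k(1) = Σ_{n≥k} (-1)^{n-k} C(n-1,k-1) xⁿ/n!` (with `C(i,-1) = δ_{i,-1}`),
and `P_K^k(1) ∈ xᵏℝ[[x]] \ xᵏ⁺¹ℝ[[x]]` for `k ≥ 1`. -/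
theorem stmt18 :
    ∀ k : ℕ,
      (PK^[k] 1 = PowerSeries.mk fun n =>
        if k = 0 then (if n = 0 then (1 : ℝ) else 0)
        else if n < k then 0
        else (-1 : ℝ) ^ (n - k) * ((n - 1).choose (k - 1)) / n.factorial) ∧
      (1 ≤ k → (X : ℝ⟦X⟧) ^ k ∣ PK^[k] 1 ∧ ¬ (X : ℝ⟦X⟧) ^ (k + 1) ∣ PK^[k] 1) := by
  intro k
  rcases eq_or_ne k 0 with rfl | hk
  · exact ⟨by ext n; simp [coeff_one], by omega⟩
  have hcoeff := coeff_iterate_PK_one_of_ne_zero hk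
  refine ⟨ext fun n => by rw [hcoeff, coeff_mk, if_neg hk], fun _ => ⟨?_, ?_⟩⟩
  · exact X_pow_dvd_iff.2 fun m hm => by rw [hcoeff, if_pos hm]
  · rw [X_pow_dvd_iff, not_forall]
    refine ⟨k, fun h => ?_⟩
    have hk_coeff := h k.lt_succ_self
    rw [hcoeff, if_neg (lt_irrefl k), Nat.sub_self, Nat.choose_self] at hk_coeff
    simp [Nat.factorial_ne_zero] at hk_coeff
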